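/- Let 1 ≤ n ≤ N and z ∈ ℂ. For U Haar-distributed in the unitary group U(N), the expected value of Per_n(U − z), the permanent of the upper-left n×n block of U − z·I, equals (−z)ⁿ. -/

import Mathlib

open MeasureTheory

namespace RandomImmanants

/-- The Borel/pi measurable structure on square complex matrices. -/
noncomputable instance (N : ℕ) : MeasurableSpace (Matrix (Fin N) (Fin N) ℂ) :=
  inferInstanceAs (MeasurableSpace (Fin N → Fin N → ℂ))

/-- The Borel/pi measurable structure on square real matrices. -/
instance (N : ℕ) : MeasurableSpace (Matrix (Fin N) (Fin N) ℝ) :=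
  inferInstanceAs (MeasurableSpace (Fin N → Fin N → ℝ))

/-- The `i`-th largest part (0-indexed) of a partition; `0` beyond its length. -/
def partNth {n : ℕ} (γ : Nat.Partition n) (i : ℕ) : ℕ :=
  ((γ.parts.sort (· ≤ ·)).reverse).getD i 0

/-- The number of colorings `g : {0,…,m-1} → {0,…,m-1}` that are constant on the cycles
of `π` and whose color class sizes are prescribed by `β` (this is the evaluation of the
complete homogeneous symmetric function `h_β` against the power sum `p_μ`, `μ` the cycle
type of `π`; a negative entry of `β` gives `0`). -/
def etaChar {m : ℕ} (β : Fin m → ℤ) (π : Equiv.Perm (Fin m)) : ℤ :=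
  ((Finset.univ.filter fun g : Fin m → Fin m =>
    g ∘ π = g ∧ ∀ i : Fin m,
      (((Finset.univ.filter fun k => g k = i).card : ℤ) = β i)).card : ℤ)

/-- The irreducible character `χ_γ` of the symmetric group `S_m` labelled by the partition
`γ ⊢ m`, via the Jacobi–Trudi determinantal formula `χ_γ = det (h_{γ_i - i + j})_{1 ≤ i,j ≤ m}`
applied to power sums. -/
def chiChar {m : ℕ} (γ : Nat.Partition m) (π : Equiv.Perm (Fin m)) : ℤ :=
  ∑ σ : Equiv.Perm (Fin m),
    ((Equiv.Perm.sign σ : ℤˣ) : ℤ) *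
      etaChar (fun i => (partNth γ i : ℤ) + ((σ i : ℕ) : ℤ) - ((i : ℕ) : ℤ)) π

/-- The partition `2λ = (2λ₁, 2λ₂, …)` of `2n` obtained by doubling each part of `λ ⊢ n`. -/
def doublePart {n : ℕ} (lam : Nat.Partition n) : Nat.Partition (2 * n) where
  parts := lam.parts.map (fun a => 2 * a)
  parts_pos := by
    intro i hi
    obtain ⟨a, ha, rfl⟩ := Multiset.mem_map.mp hi
    have := lam.parts_pos ha
    omega
  parts_sum := by
    have h : (lam.parts.map fun a => 2 * a).sum = 2 * lam.parts.sum := by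
      simpa using Multiset.sum_map_mul_left (a := (2 : ℕ)) (f := fun a => a) (s := lam.parts)
    rw [h, lam.parts_sum]

/-- The partition `(1ⁿ)` of `n`. -/
def onesPart (n : ℕ) : Nat.Partition n where
  parts := Multiset.replicate n 1
  parts_pos := by
    intro i hi
    rw [Multiset.eq_of_mem_replicate hi]
    exact one_pos
  parts_sum := by simp

/-- Letters `{1,…,2n}` (0-indexed: `{0,…,2n-1}`) as pairs: `(k, r) ↦ 2k + r`, so the
1-indexed letter `2k-1` (odd) is `(k-1, 0)` and the letter `2k` (even) is `(k-1, 1)`. -/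
def pairEquiv (n : ℕ) : Fin n × Fin 2 ≃ Fin (2 * n) where
  toFun x := ⟨2 * (x.1 : ℕ) + (x.2 : ℕ), by have h1 := x.1.isLt; have h2 := x.2.isLt; omega⟩
  invFun i := (⟨(i : ℕ) / 2, by have := i.isLt; omega⟩, ⟨(i : ℕ) % 2, by omega⟩)
  left_inv := by
    rintro ⟨⟨a, ha⟩, ⟨b, hb⟩⟩
    simp only [Prod.mk.injEq]
    constructor <;> exact Fin.ext (by simp; omega)
  right_inv := by
    rintro ⟨v, hv⟩
    exact Fin.ext (by simp; omega)

/-- The fixed-point free involution `p = (1 2)(3 4)⋯(2n-1 2n)` of `{1,…,2n}`. -/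
def pairSwap (n : ℕ) : Equiv.Perm (Fin (2 * n)) :=
  (pairEquiv n).permCongr (Equiv.prodCongr (Equiv.refl (Fin n)) (Equiv.swap 0 1))

/-- For `π ∈ S_n`, the permutation `π_o ∈ S_{2n}` acting on the odd letters:
`π_o(2k-1) = 2π(k)-1` and `π_o(2k) = 2k` (1-indexed). -/
def toOdd {n : ℕ} (π : Equiv.Perm (Fin n)) : Equiv.Perm (Fin (2 * n)) :=
  (pairEquiv n).permCongr
    (Equiv.prodCongrLeft fun r : Fin 2 => if r = 0 then π else Equiv.refl (Fin n))

/-- For `π ∈ S_n`, the permutation `π_e ∈ S_{2n}` acting on the even letters: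
`π_e(2k) = 2π(k)` and `π_e(2k-1) = 2k-1` (1-indexed). -/
def toEven {n : ℕ} (π : Equiv.Perm (Fin n)) : Equiv.Perm (Fin (2 * n)) :=
  (pairEquiv n).permCongr
    (Equiv.prodCongrLeft fun r : Fin 2 => if r = 1 then π else Equiv.refl (Fin n))

/-- The hyperoctahedral group `H_n ⊂ S_{2n}`: the centralizer of the trivial matching
`{{1,2},{3,4},…,{2n-1,2n}}`, i.e. of the involution `pairSwap n`. -/
def hyperOct (n : ℕ) : Finset (Equiv.Perm (Fin (2 * n))) :=
  Finset.univ.filter fun h => h * pairSwap n = pairSwap n * h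

/-- The zonal spherical function `ω_λ` of the Gelfand pair `(S_{2n}, H_n)`:
`ω_λ(τ) = (1/|H_n|) ∑_{ξ ∈ H_n} χ_{2λ}(τξ)`. -/
noncomputable def omegaSph {n : ℕ} (lam : Nat.Partition n) (τ : Equiv.Perm (Fin (2 * n))) : ℝ :=
  (1 / ((hyperOct n).card : ℝ)) * ∑ ξ ∈ hyperOct n, (chiChar (doublePart lam) (τ * ξ) : ℝ)

/-- `g_λ = ∑_{μ ⊢ n} |C_μ| ω_λ(μ)`, written as a sum over `S_n` (the permutations of cycle
type `μ`, embedded on the odd letters, contribute `|C_μ| ω_λ(μ)`). -/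
noncomputable def gFun {n : ℕ} (lam : Nat.Partition n) : ℝ :=
  ∑ σ : Equiv.Perm (Fin n), omegaSph lam (toOdd σ)

/-- `G_{λ,γ} = ∑_{μ ⊢ n} |C_μ| ω_λ(μ) χ_γ(μ)`, written as a sum over `S_n`. -/
noncomputable def GFun {n : ℕ} (lam γ : Nat.Partition n) : ℝ :=
  ∑ σ : Equiv.Perm (Fin n), omegaSph lam (toOdd σ) * (chiChar γ σ : ℝ)

/-- `[N]_γ^{(α)} = ∏_{(i,j) ∈ γ} (N + α(j-1) - i + 1)`, the product running over the boxes
of the Young diagram of `γ` (row `i`, column `j`, 1-indexed). -/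
def polyGen (α : ℤ) (N : ℤ) {m : ℕ} (γ : Nat.Partition m) : ℤ :=
  ∏ i ∈ Finset.range m, ∏ j ∈ Finset.range (partNth γ i), (N + α * (j : ℤ) - (i : ℤ))

/-- The upper-left `n × n` block of an `N × N` matrix (junk value `0` if `n > N`). -/
def subBlock (n N : ℕ) {R : Type*} [Zero R] (U : Matrix (Fin N) (Fin N) R) :
    Matrix (Fin n) (Fin n) R := fun i j =>
  if h : (i : ℕ) < N ∧ (j : ℕ) < N then U ⟨i, h.1⟩ ⟨j, h.2⟩ else 0

/-- The permanent of a square matrix. -/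
def perMat {m : ℕ} {R : Type*} [CommRing R] (A : Matrix (Fin m) (Fin m) R) : R :=
  ∑ π : Equiv.Perm (Fin m), ∏ k : Fin m, A k (π k)

/-- The immanant `Imm_γ(A) = ∑_{π ∈ S_m} χ_γ(π) ∏_k A_{k, π(k)}`. -/
def immMat {m : ℕ} {R : Type*} [CommRing R] (γ : Nat.Partition m)
    (A : Matrix (Fin m) (Fin m) R) : R :=
  ∑ π : Equiv.Perm (Fin m), (chiChar γ π : R) * ∏ k : Fin m, A k (π k)

/-- The full cycle type of a permutation of `m` letters, a partition of `m`
(fixed points contribute parts equal to `1`). -/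
def fullCycleType {m : ℕ} [Fintype (Fin m)] (σ : Equiv.Perm (Fin m)) : Multiset ℕ :=
  σ.cycleType + Multiset.replicate (m - σ.cycleType.sum) 1

/-- Halve all multiplicities in a multiset. -/
def halfMultiset (ν : Multiset ℕ) : Multiset ℕ :=
  ∑ k ∈ ν.toFinset, Multiset.replicate (ν.count k / 2) k

/-- The coset type of `σ ∈ S_{2n}`: the connected components of the graph on `{1,…,2n}`
whose edges are the blocks of the trivial matching `t` and of `σ(t)` are exactly the
cycle-pairs of the permutation `p ∘ (σ p σ⁻¹)` (`p = pairSwap n`), each component with `2k`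
vertices producing two `k`-cycles; so the coset type is obtained by halving the multiplicities
in the full cycle type of `p * (σ * p * σ⁻¹)`. -/
def cosetTypeM (n : ℕ) (σ : Equiv.Perm (Fin (2 * n))) : Multiset ℕ :=
  halfMultiset (fullCycleType (pairSwap n * (σ * pairSwap n * σ⁻¹)))
/-!
Expanding the permanent of `U_n - z` turns it into `Per(-z) = (-z)ⁿ` plus a combination of
monomials `∏_{k ∈ S} U_{k, π k}` with `S` nonempty. Each such monomial has Haar mean zero: left
multiplication by the scalar unitary `ζ • 1` preserves the Haar measure and multiplies a monomial
of degree `m` by `ζ ^ m`, and `ζ` with `|ζ| = 1` can be chosen with `ζ ^ m ≠ 1`.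
-/

theorem perMat_eq_permanent {m : ℕ} {R : Type*} [CommRing R] (A : Matrix (Fin m) (Fin m) R) :
    perMat A = A.permanent := by
  rw [← Matrix.permanent_transpose]
  rfl

theorem perMat_smul_one {m : ℕ} {R : Type*} [CommRing R] (c : R) :
    perMat (c • 1 : Matrix (Fin m) (Fin m) R) = c ^ m := by
  simp [perMat_eq_permanent]

theorem subBlock_eq_submatrix {n N : ℕ} (h : n ≤ N) {R : Type*} [Zero R]
    (A : Matrix (Fin N) (Fin N) R) :
    subBlock n N A = A.submatrix (Fin.castLE h) (Fin.castLE h) := by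
  ext i j
  simp [subBlock, Fin.castLE, i.isLt.trans_le h, j.isLt.trans_le h]

theorem subBlock_sub_smul_one {n N : ℕ} (h : n ≤ N) {R : Type*} [Ring R]
    (A : Matrix (Fin N) (Fin N) R) (z : R) :
    subBlock n N (A - z • 1) = A.submatrix (Fin.castLE h) (Fin.castLE h) + (-z) • 1 := by
  rw [subBlock_eq_submatrix h]
  ext i j
  simp [Matrix.one_apply, sub_eq_add_neg]

theorem integral_perMat_add_const {Ω 𝕜 : Type*} [MeasurableSpace Ω] [RCLike 𝕜] (μ : Measure Ω)
    [IsProbabilityMeasure μ] {m : ℕ} (A : Ω → Matrix (Fin m) (Fin m) 𝕜)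
    (B : Matrix (Fin m) (Fin m) 𝕜)
    (h_int : ∀ (S : Finset (Fin m)) (col : Fin m → Fin m),
      Integrable (fun ω => ∏ k ∈ S, A ω k (col k)) μ)
    (h_zero : ∀ (S : Finset (Fin m)) (col : Fin m → Fin m), S.Nonempty →
      ∫ ω, ∏ k ∈ S, A ω k (col k) ∂μ = 0) :
    ∫ ω, perMat (A ω + B) ∂μ = perMat B := by
  have h_expand : ∀ ω, perMat (A ω + B) = ∑ π : Equiv.Perm (Fin m), ∑ S ∈ Finset.univ.powerset,
      (∏ k ∈ S, A ω k (π k)) * ∏ k ∈ Finset.univ \ S, B k (π k) := fun ω =>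
    Finset.sum_congr rfl fun π _ => Finset.prod_add _ _ _
  have h_inner : ∀ π : Equiv.Perm (Fin m), ∫ ω, ∑ S ∈ Finset.univ.powerset,
      (∏ k ∈ S, A ω k (π k)) * ∏ k ∈ Finset.univ \ S, B k (π k) ∂μ = ∏ k, B k (π k) := by
    intro π
    rw [integral_finsetSum _ fun S _ => (h_int S π).mul_const _,
      Finset.sum_eq_single_of_mem ∅ (Finset.empty_mem_powerset _) fun S _ hS => by
        rw [integral_mul_const, h_zero S π (Finset.nonempty_iff_ne_empty.mpr hS), zero_mul]]
    simp
  calc ∫ ω, perMat (A ω + B) ∂μ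
      = ∑ π : Equiv.Perm (Fin m), ∫ ω, ∑ S ∈ Finset.univ.powerset,
          (∏ k ∈ S, A ω k (π k)) * ∏ k ∈ Finset.univ \ S, B k (π k) ∂μ := by
        simp_rw [h_expand]
        exact integral_finsetSum _ fun π _ =>
          integrable_finsetSum _ fun S _ => (h_int S π).mul_const _
    _ = perMat B := Finset.sum_congr rfl fun π _ => h_inner π

theorem integral_eq_zero_of_mul_left_eq_smul {G 𝕜 E : Type*} [MeasurableSpace G] [Group G]
    [MeasurableMul G] [NontriviallyNormedField 𝕜] [NormedAddCommGroup E] [NormedSpace ℝ E]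
    [NormedSpace 𝕜 E] [SMulCommClass ℝ 𝕜 E] (μ : Measure G) [μ.IsMulLeftInvariant]
    {f : G → E} {g : G} {c : 𝕜} (hc : c ≠ 1) (hf : ∀ x, f (g * x) = c • f x) :
    ∫ x, f x ∂μ = 0 := by
  have h := integral_mul_left_eq_self (μ := μ) f g
  simp_rw [hf, integral_smul] at h
  have h_fixed : (c - 1) • ∫ x, f x ∂μ = 0 := by rw [sub_smul, h, one_smul, sub_self]
  exact (smul_eq_zero.mp h_fixed).resolve_left (sub_ne_zero.mpr hc)

theorem Complex.exists_norm_eq_one_pow_ne_one {m : ℕ} (hm : m ≠ 0) :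
    ∃ ζ : ℂ, ‖ζ‖ = 1 ∧ ζ ^ m ≠ 1 := by
  have hζ := Complex.isPrimitiveRoot_exp (m + 1) m.succ_ne_zero
  exact ⟨_, hζ.norm'_eq_one m.succ_ne_zero, hζ.pow_ne_one_of_pos_of_lt hm m.lt_succ_self⟩

theorem Complex.mem_unitary_of_norm_eq_one {ζ : ℂ} (hζ : ‖ζ‖ = 1) : ζ ∈ unitary ℂ := by
  rw [Unitary.mem_iff_star_mul_self, Complex.star_def, Complex.conj_mul', hζ]
  norm_num

theorem integral_prod_entry_eq_zero {n ι : Type*} [Fintype n] [DecidableEq n]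
    [MeasurableSpace (Matrix.unitaryGroup n ℂ)] [MeasurableMul (Matrix.unitaryGroup n ℂ)]
    (μ : Measure (Matrix.unitaryGroup n ℂ)) [μ.IsMulLeftInvariant]
    {S : Finset ι} (hS : S.Nonempty) (row col : ι → n) :
    ∫ U, ∏ k ∈ S, (U : Matrix n n ℂ) (row k) (col k) ∂μ = 0 := by
  obtain ⟨ζ, hζ, hζS⟩ := Complex.exists_norm_eq_one_pow_ne_one hS.card_pos.ne'
  let u : unitary ℂ := ⟨ζ, Complex.mem_unitary_of_norm_eq_one hζ⟩
  refine integral_eq_zero_of_mul_left_eq_smul μ (g := u • 1) hζS fun U => ?_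
  simp [Finset.prod_mul_distrib, u]

instance (N : ℕ) : BorelSpace (Matrix (Fin N) (Fin N) ℂ) :=
  inferInstanceAs (BorelSpace (Fin N → Fin N → ℂ))

theorem integrable_prod_entry {N : ℕ} {ι : Type*} (μ : Measure (Matrix.unitaryGroup (Fin N) ℂ))
    [IsFiniteMeasure μ] (S : Finset ι) (row col : ι → Fin N) :
    Integrable (fun U : Matrix.unitaryGroup (Fin N) ℂ =>
      ∏ k ∈ S, (U : Matrix (Fin N) (Fin N) ℂ) (row k) (col k)) μ := by
  refine .of_bound (Continuous.aestronglyMeasurable ?_) 1 (ae_of_all _ fun U => ?_)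
  · exact continuous_finsetProd _ fun k _ => continuous_subtype_val.matrix_elem _ _
  · rw [norm_prod]
    exact Finset.prod_le_one (fun _ _ => norm_nonneg _)
      fun k _ => entry_norm_bound_of_unitary U.2 _ _

theorem permanent_polynomial_mean_unitary_general (n N : ℕ) (hnN : n ≤ N) (z : ℂ)
    (μ : Measure (Matrix.unitaryGroup (Fin N) ℂ))
    [μ.IsHaarMeasure] [IsProbabilityMeasure μ] :
    (∫ U, perMat (subBlock n N ((U : Matrix (Fin N) (Fin N) ℂ) - z • 1)) ∂μ)
      = (-z) ^ n := by
  set c := Fin.castLE hnN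
  simp_rw [subBlock_sub_smul_one hnN]
  rw [integral_perMat_add_const μ (fun U => (U : Matrix (Fin N) (Fin N) ℂ).submatrix c c) _
    (fun S col => integrable_prod_entry μ S c (c ∘ col))
    (fun S col hS => integral_prod_entry_eq_zero μ hS c (c ∘ col)), perMat_smul_one]

/-- For `1 ≤ n ≤ N`, `z ∈ ℂ`, and `U` Haar-distributed in `U(N)`, the
average of `Per_n(U - z)` (the permanent of the upper-left `n × n` block of `U - z·I`)
equals `(-z)ⁿ`. -/
theorem permanent_polynomial_mean_unitary (n N : ℕ) (hn : 1 ≤ n) (hnN : n ≤ N) (z : ℂ)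
    (μ : Measure (Matrix.unitaryGroup (Fin N) ℂ))
    [μ.IsHaarMeasure] [IsProbabilityMeasure μ] :
    (∫ U, perMat (subBlock n N ((U : Matrix (Fin N) (Fin N) ℂ) - z • 1)) ∂μ)
      = (-z) ^ n :=
  permanent_polynomial_mean_unitary_general n N hnN z μ

end RandomImmanants
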